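/- arXiv:2003.04943 — 3 statements merged into one kernel-verified Lean document; each statement's English description precedes it below -/
import Mathlib

section
/- Let P be an orthomodular poset of finite height and x, y ∈ P with x ⊥ y (i.e. x ≤ y'). Then for every a ∈ x → y, one has a → y = {x ∨ y}; in other words (x → y) → y = x ∨ y. -/
/-!
Write `j = x ∨ y`. By de Morgan `j'` is the greatest lower bound of `x'` and `y'`, so
`x → y = {y ∨ j'}`; for its element `a = y ∨ j'` we have `y ≤ a`, so `a'` is the greatest
lower bound of `a'` and `y'` and `a → y = {y ∨ a'}`. Finally `y ∨ a' = j`: clearly `y, a' ≤ j`,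
and `a ≤ x'` (as `y, j' ≤ x'`) gives `x ≤ a'`, so every upper bound of `y` and `a'` lies
above `x` and `y`, hence above `j`.
-/

/-- An orthomodular poset: a bounded poset with an antitone involution `compl`
that is a complementation (⊤ is the LUB and ⊥ the GLB of `{x, compl x}`),
in which joins of orthogonal pairs exist, satisfying the orthomodular law. -/
structure OrthomodularPoset (P : Type*) [PartialOrder P] [BoundedOrder P] where
  compl : P → P
  antitone : ∀ x y : P, x ≤ y → compl y ≤ compl x
  involution : ∀ x : P, compl (compl x) = x
  lub_compl : ∀ x : P, IsLUB {x, compl x} ⊤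
  glb_compl : ∀ x : P, IsGLB {x, compl x} ⊥
  join_of_orth : ∀ x y : P, x ≤ compl y → ∃ j : P, IsLUB {x, y} j
  orthomodular : ∀ x y j k : P, x ≤ y → IsLUB {compl y, x} j →
    IsLUB {compl j, x} k → k = y

/-- A poset is of finite height if every chain is finite. -/
def FiniteHeight (P : Type*) [PartialOrder P] : Prop :=
  ∀ C : Set P, IsChain (· ≤ ·) C → C.Finite

/-- `Max A`: the set of maximal elements of `A`. -/
def maxElems {P : Type*} [PartialOrder P] (A : Set P) : Set P :=
  {m | m ∈ A ∧ ∀ x ∈ A, m ≤ x → m = x}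

/-- The implication operator: `x → y := {y ∨ m | m ∈ Max L(x', y')}`,
where `y ∨ m` is expressed via `IsLUB`. -/
def ompImpl {P : Type*} [PartialOrder P] [BoundedOrder P] (O : OrthomodularPoset P)
    (x y : P) : Set P :=
  {z | ∃ m ∈ maxElems (lowerBounds {O.compl x, O.compl y}), IsLUB {y, m} z}

open Set

section Bounds

variable {P : Type*} [PartialOrder P]

theorem isLUB_pair_iff {a b j : P} :
    IsLUB {a, b} j ↔ a ≤ j ∧ b ≤ j ∧ ∀ u, a ≤ u → b ≤ u → j ≤ u := by
  simp only [IsLUB, IsLeast, upperBounds_insert, upperBounds_singleton, mem_lowerBounds,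
    mem_inter_iff, mem_Ici, and_imp, and_assoc]

theorem isGLB_pair_iff {a b g : P} :
    IsGLB {a, b} g ↔ g ≤ a ∧ g ≤ b ∧ ∀ l, l ≤ a → l ≤ b → l ≤ g :=
  isLUB_pair_iff (P := Pᵒᵈ)

theorem isGLB_pair_of_le {a b : P} (h : a ≤ b) : IsGLB {a, b} a :=
  isGLB_pair_iff.2 ⟨le_rfl, h, fun _ hl _ => hl⟩

theorem maxElems_eq_singleton_of_isGreatest {A : Set P} {g : P} (h : IsGreatest A g) :
    maxElems A = {g} := by
  ext m
  refine ⟨fun hm => hm.2 g h.1 (h.2 hm.1), ?_⟩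
  rintro rfl
  exact ⟨h.1, fun x hx hgx => le_antisymm hgx (h.2 hx)⟩

theorem setOf_isLUB_eq_singleton {s : Set P} {j : P} (h : IsLUB s j) :
    {z | IsLUB s z} = {j} :=
  Set.ext fun _ => ⟨fun hz => hz.unique h, fun hz => hz ▸ h⟩

end Bounds

namespace OrthomodularPoset

variable {P : Type*} [PartialOrder P] [BoundedOrder P] (O : OrthomodularPoset P)

theorem compl_le_compl {x y : P} (h : x ≤ y) : O.compl y ≤ O.compl x :=
  O.antitone x y h

theorem le_compl_comm {x y : P} : x ≤ O.compl y ↔ y ≤ O.compl x :=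
  ⟨fun h => by simpa only [O.involution] using O.compl_le_compl h,
    fun h => by simpa only [O.involution] using O.compl_le_compl h⟩

theorem compl_le_comm {x y : P} : O.compl x ≤ y ↔ O.compl y ≤ x := by
  simpa only [O.involution] using O.le_compl_comm (x := O.compl x) (y := O.compl y)

theorem isGLB_compl_pair {x y j : P} (h : IsLUB {x, y} j) :
    IsGLB {O.compl x, O.compl y} (O.compl j) := by
  obtain ⟨hxj, hyj, hj⟩ := isLUB_pair_iff.1 h
  refine isGLB_pair_iff.2 ⟨O.compl_le_compl hxj, O.compl_le_compl hyj, fun l hlx hly => ?_⟩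
  exact O.le_compl_comm.2 (hj _ (O.le_compl_comm.1 hlx) (O.le_compl_comm.1 hly))

theorem ompImpl_eq_of_isGLB {x y g : P} (h : IsGLB {O.compl x, O.compl y} g) :
    ompImpl O x y = {z | IsLUB {y, g} z} := by
  ext z
  simp only [ompImpl, maxElems_eq_singleton_of_isGreatest h, mem_singleton_iff,
    exists_eq_left, mem_ofPred_eq]

theorem ompImpl_eq_of_le {a y : P} (h : y ≤ a) : ompImpl O a y = {z | IsLUB {y, O.compl a} z} :=
  O.ompImpl_eq_of_isGLB (isGLB_pair_of_le (O.compl_le_compl h))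

theorem isLUB_pair_compl_of_isLUB {x y j a : P} (hxy : x ≤ O.compl y) (hj : IsLUB {x, y} j)
    (ha : IsLUB {y, O.compl j} a) : IsLUB {y, O.compl a} j := by
  obtain ⟨hxj, hyj, hj⟩ := isLUB_pair_iff.1 hj
  obtain ⟨-, hja, ha⟩ := isLUB_pair_iff.1 ha
  have hax : a ≤ O.compl x := ha _ (O.le_compl_comm.1 hxy) (O.compl_le_compl hxj)
  refine isLUB_pair_iff.2 ⟨hyj, O.compl_le_comm.1 hja, fun u hyu hau => ?_⟩
  exact hj u ((O.le_compl_comm.1 hax).trans hau) hyu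

end OrthomodularPoset

theorem omp_impl_impl_of_orth_general {P : Type*} [PartialOrder P] [BoundedOrder P]
    (O : OrthomodularPoset P) (x y : P)
    (hxy : x ≤ O.compl y) :
    ∃ j : P, IsLUB {x, y} j ∧ ∀ a ∈ ompImpl O x y, ompImpl O a y = {j} := by
  obtain ⟨j, hj⟩ := O.join_of_orth x y hxy
  refine ⟨j, hj, fun a ha => ?_⟩
  rw [O.ompImpl_eq_of_isGLB (O.isGLB_compl_pair hj)] at ha
  rw [O.ompImpl_eq_of_le (isLUB_pair_iff.1 ha).1]
  exact setOf_isLUB_eq_singleton (O.isLUB_pair_compl_of_isLUB hxy hj ha)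

/-- If `x ⊥ y` then `(x → y) → y = x ∨ y`: for every `a ∈ x → y`
one has `a → y = {x ∨ y}`. -/
theorem omp_impl_impl_of_orth {P : Type*} [PartialOrder P] [BoundedOrder P]
    (O : OrthomodularPoset P) (hfin : FiniteHeight P) (x y : P)
    (hxy : x ≤ O.compl y) :
    ∃ j : P, IsLUB {x, y} j ∧ ∀ a ∈ ompImpl O x y, ompImpl O a y = {j} :=
  omp_impl_impl_of_orth_general O x y hxy
end

section
/- Let P be an orthomodular poset of finite height. Then for all x, y ∈ P and every a ∈ y → x, one has x → a = {1}; in other words x → (y → x) = 1. -/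
theorem lowerBounds_pair_of_le {α : Type*} [Preorder α] {a b : α} (h : a ≤ b) :
    lowerBounds {a, b} = Set.Iic a := by
  ext z
  simp only [lowerBounds_insert, lowerBounds_singleton, Set.mem_inter_iff, Set.mem_Iic]
  exact ⟨And.left, fun hz => ⟨hz, hz.trans h⟩⟩

theorem maxElems_Iic {α : Type*} [PartialOrder α] (a : α) : maxElems (Set.Iic a) = {a} := by
  ext z
  constructor
  · rintro ⟨hza, hmax⟩
    exact hmax a le_rfl hza
  · rintro rfl
    exact ⟨le_rfl, fun _ hw hzw => le_antisymm hzw hw⟩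

namespace OrthomodularPoset

variable {P : Type*} [PartialOrder P] [BoundedOrder P] (O : OrthomodularPoset P)

theorem le_of_mem_ompImpl {x y z : P} (hz : z ∈ ompImpl O x y) : y ≤ z := by
  obtain ⟨_, _, hlub⟩ := hz
  exact hlub.1 (Set.mem_insert y _)

/-- For `x ≤ y` the only maximal lower bound of `{x', y'}` is `y'`, and `y ∨ y' = 1`. -/
theorem ompImpl_eq_top_of_le {x y : P} (hxy : x ≤ y) : ompImpl O x y = {⊤} := by
  have hmax : maxElems (lowerBounds {O.compl x, O.compl y}) = {O.compl y} := by
    rw [Set.pair_comm, lowerBounds_pair_of_le (O.antitone x y hxy), maxElems_Iic]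
  ext z
  simp only [ompImpl, hmax, Set.mem_singleton_iff, exists_eq_left]
  exact ⟨fun hz => hz.unique (O.lub_compl y), fun hz => hz ▸ O.lub_compl y⟩

end OrthomodularPoset

theorem omp_impl_impl_self_general {P : Type*} [PartialOrder P] [BoundedOrder P]
    (O : OrthomodularPoset P) (x y : P) :
    ∀ a ∈ ompImpl O y x, ompImpl O x a = {⊤} :=
  fun _ ha => O.ompImpl_eq_top_of_le (O.le_of_mem_ompImpl ha)

/-- `x → (y → x) = 1`: for every `a ∈ y → x`, one has `x → a = {1}`. -/
theorem omp_impl_impl_self {P : Type*} [PartialOrder P] [BoundedOrder P]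
    (O : OrthomodularPoset P) (hfin : FiniteHeight P) (x y : P) :
    ∀ a ∈ ompImpl O y x, ompImpl O x a = {⊤} :=
  omp_impl_impl_self_general O x y
end

section
/- Let P be an orthomodular poset of finite height and x, y, z ∈ P with x ≤ y. Then for every u ∈ y → z there exists t ∈ x → z with u ≤ t; consequently (y → z) → (x → z) = 1 (i.e. for every u ∈ y → z there exists t ∈ x → z with u → t = {1}). -/
/-! If `u = z ∨ m` with `m` maximal in `L(y', z')`, then `m ∈ L(x', z')` because `y' ≤ x'`; by
finite height `m` lies below some maximal `m'` of `L(x', z')`, and `t = z ∨ m'` (which exists as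
`m' ≤ z'`) is an element of `x → z` above `u`. Finally `u → t = {1}` whenever `u ≤ t`, since then
`L(u', t')` has greatest element `t'` and `t ∨ t' = 1`. -/

lemma mem_maxElems_iff {P : Type*} [PartialOrder P] {S : Set P} {m : P} :
    m ∈ maxElems S ↔ Maximal (· ∈ S) m :=
  and_congr_right fun _ =>
    forall₂_congr fun _ _ => imp_congr_right fun hm => ⟨fun h => h.ge, hm.antisymm⟩

lemma FiniteHeight.exists_le_maximal {P : Type*} [PartialOrder P] (hP : FiniteHeight P)
    {S : Set P} {a : P} (ha : a ∈ S) : ∃ m, a ≤ m ∧ Maximal (· ∈ S) m := by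
  refine zorn_le_nonempty₀ S (fun c hcS hc b hb => ?_) a ha
  obtain ⟨ub, hub⟩ := (hP c hc).exists_maximal ⟨b, hb⟩
  exact ⟨ub, hcS hub.1, fun w hw => (hc.total hw hub.1).elim id (hub.2 hw)⟩

lemma mem_lowerBounds_pair {P : Type*} [Preorder P] {a b m : P} :
    m ∈ lowerBounds {a, b} ↔ m ≤ a ∧ m ≤ b := by
  simp only [lowerBounds_insert, lowerBounds_singleton, Set.mem_inter_iff, Set.mem_Iic]

lemma IsLUB.le_iff_of_pair {P : Type*} [Preorder P] {a b j c : P} (h : IsLUB {a, b} j) :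
    j ≤ c ↔ a ≤ c ∧ b ≤ c := by
  simp only [isLUB_le_iff h, upperBounds_insert, upperBounds_singleton, Set.mem_inter_iff,
    Set.mem_Ici]

namespace OrthomodularPoset

variable {P : Type*} [PartialOrder P] [BoundedOrder P] (O : OrthomodularPoset P)

lemma le_compl_comm_s13 {a b : P} (h : a ≤ O.compl b) : b ≤ O.compl a := by
  simpa only [O.involution] using O.antitone _ _ h

lemma ompImpl_of_le {u t : P} (hut : u ≤ t) : ompImpl O u t = {⊤} := by
  have hbot : O.compl t ∈ lowerBounds {O.compl u, O.compl t} :=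
    mem_lowerBounds_pair.2 ⟨O.antitone _ _ hut, le_rfl⟩
  have hmax : O.compl t ∈ maxElems (lowerBounds {O.compl u, O.compl t}) :=
    ⟨hbot, fun w hw hle => le_antisymm hle (mem_lowerBounds_pair.1 hw).2⟩
  ext w
  constructor
  · rintro ⟨m, ⟨hmL, hm⟩, hlub⟩
    obtain rfl : m = O.compl t := hm _ hbot (mem_lowerBounds_pair.1 hmL).2
    exact hlub.unique (O.lub_compl t)
  · rintro rfl
    exact ⟨O.compl t, hmax, O.lub_compl t⟩

lemma exists_mem_ompImpl_above (hP : FiniteHeight P) {x z m : P}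
    (hm : m ∈ lowerBounds {O.compl x, O.compl z}) :
    ∃ t ∈ ompImpl O x z, z ≤ t ∧ m ≤ t := by
  obtain ⟨m', hmm', hm'max⟩ := hP.exists_le_maximal hm
  have hm'z : m' ≤ O.compl z := (mem_lowerBounds_pair.1 hm'max.1).2
  obtain ⟨t, ht⟩ := O.join_of_orth z m' (O.le_compl_comm_s13 hm'z)
  have hzt : z ≤ t ∧ m' ≤ t := (ht.le_iff_of_pair).1 le_rfl
  exact ⟨t, ⟨m', mem_maxElems_iff.2 hm'max, ht⟩, hzt.1, hmm'.trans hzt.2⟩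

end OrthomodularPoset

/-- If `x ≤ y` then for every `u ∈ y → z` there exists `t ∈ x → z` with
`u ≤ t`; consequently `(y → z) → (x → z) = 1`, i.e. `u → t = {1}`. -/
theorem omp_impl_antitone {P : Type*} [PartialOrder P] [BoundedOrder P]
    (O : OrthomodularPoset P) (hfin : FiniteHeight P) (x y z : P)
    (hxy : x ≤ y) :
    ∀ u ∈ ompImpl O y z, ∃ t ∈ ompImpl O x z, u ≤ t ∧ ompImpl O u t = {⊤} := by
  rintro u ⟨m, ⟨hmL, -⟩, hu⟩
  have hmy : m ≤ O.compl y ∧ m ≤ O.compl z := mem_lowerBounds_pair.1 hmL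
  have hmx : m ∈ lowerBounds {O.compl x, O.compl z} :=
    mem_lowerBounds_pair.2 ⟨hmy.1.trans (O.antitone _ _ hxy), hmy.2⟩
  obtain ⟨t, ht, hzt, hmt⟩ := O.exists_mem_ompImpl_above hfin hmx
  have hut : u ≤ t := hu.le_iff_of_pair.2 ⟨hzt, hmt⟩
  exact ⟨t, ht, hut, O.ompImpl_of_le hut⟩
end
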